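/- arXiv:1612.05139 — 4 statements merged into one kernel-verified Lean document; each statement's English description precedes it below -/
import Mathlib

section
/- Let C be a monoidal category with unit object E, left unitor λ and right unitor ρ, equipped with natural transformations ι¹ : P₁ ⟹ ⊗ and ι² : P₂ ⟹ ⊗ (where P₁, P₂ : C × C ⥤ C are the projection functors and ⊗ : C × C ⥤ C is the tensor product bifunctor) which are compatible with the unit constraints, i.e. λ_A ∘ ι²_{E,A} = id_A and ρ_A ∘ ι¹_{A,E} = id_A for every object A. Then E is an initial object of C (for every object A there is exactly one morphism E → A, denoted 1_A), and moreover ι¹_{A,B} = (id_A ⊗ 1_B) ∘ ρ_A⁻¹ and ι²_{A,B} = (1_A ⊗ id_B) ∘ λ_B⁻¹ for all objects A, B. -/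
/-!
Naturality of `ι¹` along `(id_A, 1_B) : (A, E) ⟶ (A, B)` gives
`ι¹_{A,B} = (id_A ⊗ 1_B) ∘ ι¹_{A,E}`, and compatibility forces `ι¹_{A,E} = ρ_A⁻¹`;
symmetrically for `ι²`. Taking `B = E` in the formula for `ι²` shows that
`f ⊗ id_E = λ_E ∘ ι²_{A,E}` does not depend on `f : E ⟶ A`, and `f` is recovered from
`f ⊗ id_E` by the right unitors, so there is at most one morphism `E ⟶ A`;
`ρ_A ∘ ι²_{A,E}` is one.
-/

open CategoryTheory MonoidalCategory

universe v u

namespace CategoryTheory.MonoidalCategory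

variable {C : Type u} [Category.{v} C] [MonoidalCategory C]

lemma app_fst_comp_id_tensorHom (ι : Prod.fst C C ⟶ tensor C) (A : C) {B' B : C}
    (g : B' ⟶ B) : ι.app (A, B') ≫ (𝟙 A ⊗ₘ g) = ι.app (A, B) :=
  (ι.naturality ((𝟙 A, g) : ((A, B') : C × C) ⟶ (A, B))).symm.trans (Category.id_comp _)

lemma app_snd_comp_tensorHom_id (ι : Prod.snd C C ⟶ tensor C) {A' A : C} (g : A' ⟶ A)
    (B : C) : ι.app (A', B) ≫ (g ⊗ₘ 𝟙 B) = ι.app (A, B) :=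
  (ι.naturality ((g, 𝟙 B) : ((A', B) : C × C) ⟶ (A, B))).symm.trans (Category.id_comp _)

lemma app_fst_eq_rightUnitor_inv_comp (ι : Prod.fst C C ⟶ tensor C)
    (hι : ∀ A : C, ι.app (A, 𝟙_ C) ≫ (ρ_ A).hom = 𝟙 A) (A : C) {B : C} (g : 𝟙_ C ⟶ B) :
    ι.app (A, B) = (ρ_ A).inv ≫ (𝟙 A ⊗ₘ g) := by
  rw [← app_fst_comp_id_tensorHom ι A g, (Iso.comp_hom_eq_id _).mp (hι A)]

lemma app_snd_eq_leftUnitor_inv_comp (ι : Prod.snd C C ⟶ tensor C)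
    (hι : ∀ A : C, ι.app (𝟙_ C, A) ≫ (λ_ A).hom = 𝟙 A) {A : C} (g : 𝟙_ C ⟶ A) (B : C) :
    ι.app (A, B) = (λ_ B).inv ≫ (g ⊗ₘ 𝟙 B) := by
  rw [← app_snd_comp_tensorHom_id ι g B, (Iso.comp_hom_eq_id _).mp (hι B)]

lemma unit_hom_ext (ι : Prod.snd C C ⟶ tensor C)
    (hι : ∀ A : C, ι.app (𝟙_ C, A) ≫ (λ_ A).hom = 𝟙 A) {A : C} (f g : 𝟙_ C ⟶ A) :
    f = g := by
  have whisker_eq : ∀ h : 𝟙_ C ⟶ A, h ▷ 𝟙_ C = (λ_ (𝟙_ C)).hom ≫ ι.app (A, 𝟙_ C) := fun h => by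
    simp [app_snd_eq_leftUnitor_inv_comp ι hι h]
  rw [← cancel_epi (ρ_ (𝟙_ C)).hom, ← rightUnitor_naturality, ← rightUnitor_naturality,
    whisker_eq f, whisker_eq g]

end CategoryTheory.MonoidalCategory

/-- **Theorem 3.5(a).** If a monoidal category `C` carries a left
inclusion `ι¹ : P₁ ⟹ ⊗` and a right inclusion `ι² : P₂ ⟹ ⊗` which are compatible
with the unit constraints, then the unit object `E = 𝟙_ C` is initial (there is a
unique morphism `1_A : E ⟶ A` for every `A`), and
`ι¹_{A,B} = (id_A ⊗ 1_B) ∘ ρ_A⁻¹`, `ι²_{A,B} = (1_A ⊗ id_B) ∘ λ_B⁻¹`. -/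
theorem inclusions_compatible_imp_initial_unit
    {C : Type u} [Category.{v} C] [MonoidalCategory C]
    (ι₁ : CategoryTheory.Prod.fst C C ⟶ MonoidalCategory.tensor C)
    (ι₂ : CategoryTheory.Prod.snd C C ⟶ MonoidalCategory.tensor C)
    (hcompat₁ : ∀ A : C, ι₁.app (A, 𝟙_ C) ≫ (ρ_ A).hom = 𝟙 A)
    (hcompat₂ : ∀ A : C, ι₂.app (𝟙_ C, A) ≫ (λ_ A).hom = 𝟙 A) :
    (∀ A : C, ∃! _ : 𝟙_ C ⟶ A, True) ∧
    (∀ (A B : C) (oneB : 𝟙_ C ⟶ B), ι₁.app (A, B) = (ρ_ A).inv ≫ (𝟙 A ⊗ₘ oneB)) ∧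
    (∀ (A B : C) (oneA : 𝟙_ C ⟶ A), ι₂.app (A, B) = (λ_ B).inv ≫ (oneA ⊗ₘ 𝟙 B)) :=
  ⟨fun A => ⟨ι₂.app (A, 𝟙_ C) ≫ (ρ_ A).hom, trivial,
      fun f _ => unit_hom_ext ι₂ hcompat₂ f _⟩,
    fun A _ oneB => app_fst_eq_rightUnitor_inv_comp ι₁ hcompat₁ A oneB,
    fun _ B oneA => app_snd_eq_leftUnitor_inv_comp ι₂ hcompat₂ oneA B⟩
end

section
/- Let C be a category, I a directed preordered set (regarded as a category), and F : I ⥤ C a functor with colimit cocone (𝒜, (f^α : F(α) → 𝒜)_{α∈I}). Let K be a directed preordered set and (J_k)_{k∈K} a family of subsets of I such that each J_k is directed, J_k ⊆ J_{k'} whenever k ≤ k', and J = ⋃_{k∈K} J_k is cofinal in I. Suppose that for each k ∈ K the restriction of F to J_k has a colimit cocone (𝒜_k, (f^α_{(k)} : F(α) → 𝒜_k)_{α∈J_k}). Let f^k_{k'} : 𝒜_k → 𝒜_{k'} (for k ≤ k') and f^k : 𝒜_k → 𝒜 be the unique morphisms satisfying f^k_{k'} ∘ f^α_{(k)} = f^α_{(k')}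 and f^k ∘ f^α_{(k)} = f^α for all α ∈ J_k, given by the universal property of 𝒜_k. Then the assignment k ↦ 𝒜_k with the morphisms f^k_{k'} defines a functor K ⥤ C, and (𝒜, (f^k)_{k∈K}) is a colimit cocone over this functor. -/
/-!
The union `U` of the `J k` is directed, since `K` is directed and the `J k` increase, and it is
cofinal in `I`; so `c` restricted to `U` is still a colimit cocone. A compatible family
`g k : 𝒜_k ⟶ B` gives on each `J k` the cocone `f^α_{(k)} ≫ g k`; directedness of `K` makes these
agree on overlaps, so they glue to a cocone over `U`, and its descending map is the unique
`𝒜 ⟶ B` through which all `g k` factor. The functor laws and the compatibility of the `f^k`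
follow from uniqueness in the universal property of each `𝒜_k`.
-/

open CategoryTheory CategoryTheory.Limits

universe v u

def subsetEmb {I : Type*} [Preorder I] (J : Set I) : J ⥤ I :=
  Monotone.functor (f := (Subtype.val : J → I)) fun _ _ h => h

theorem final_subsetEmb_of_cofinal {I : Type*} [Preorder I] {U : Set I}
    (hU : DirectedOn (· ≤ ·) U) (hcof : ∀ α : I, ∃ β ∈ U, α ≤ β) : (subsetEmb U).Final :=
  have := hU.isDirectedOrder
  Functor.final_of_exists_of_isFiltered _
    (fun α => let ⟨β, hβ, hαβ⟩ := hcof α; ⟨⟨β, hβ⟩, ⟨homOfLE hαβ⟩⟩)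
    (fun {_ c} _ _ => ⟨c, 𝟙 c, Subsingleton.elim _ _⟩)

section Glue

variable {C : Type u} [Category.{v} C] {I K : Type*} [Preorder I] [Preorder K]
  [IsDirectedOrder K] {F : I ⥤ C} {J : K → Set I} {B : C}

theorem app_eq_app_of_compatible (hmono : Monotone J)
    {ι : ∀ k, subsetEmb (J k) ⋙ F ⟶ (Functor.const (J k)).obj B}
    (hι : ∀ {k k'} (h : k ≤ k') (α : J k), (ι k).app α = (ι k').app ⟨α, hmono h α.2⟩)
    {α : I} {k k' : K} (hk : α ∈ J k) (hk' : α ∈ J k') :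
    (ι k).app ⟨α, hk⟩ = (ι k').app ⟨α, hk'⟩ := by
  obtain ⟨k'', hk'', hk'k''⟩ := exists_ge_ge k k'
  rw [hι hk'', hι hk'k'']

noncomputable def coconeOfDirectedIUnion (hmono : Monotone J)
    (ι : ∀ k, subsetEmb (J k) ⋙ F ⟶ (Functor.const (J k)).obj B)
    (hι : ∀ {k k'} (h : k ≤ k') (α : J k), (ι k).app α = (ι k').app ⟨α, hmono h α.2⟩) :
    Cocone (subsetEmb (⋃ k, J k) ⋙ F) where
  pt := B
  ι.app α := (ι (Set.mem_iUnion.mp α.2).choose).app ⟨α, (Set.mem_iUnion.mp α.2).choose_spec⟩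
  ι.naturality α β f := by
    obtain ⟨kα, hkα⟩ := Set.mem_iUnion.mp α.2
    obtain ⟨kβ, hkβ⟩ := Set.mem_iUnion.mp β.2
    obtain ⟨k, hαk, hβk⟩ := exists_ge_ge kα kβ
    rw [app_eq_app_of_compatible hmono hι _ (hmono hαk hkα),
      app_eq_app_of_compatible hmono hι _ (hmono hβk hkβ)]
    exact (ι k).naturality (homOfLE f.le : (⟨α, hmono hαk hkα⟩ : J k) ⟶ ⟨β, hmono hβk hkβ⟩)

theorem coconeOfDirectedIUnion_ι_app (hmono : Monotone J)
    (ι : ∀ k, subsetEmb (J k) ⋙ F ⟶ (Functor.const (J k)).obj B)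
    (hι : ∀ {k k'} (h : k ≤ k') (α : J k), (ι k).app α = (ι k').app ⟨α, hmono h α.2⟩)
    {α : I} {k : K} (hk : α ∈ J k) (hα : α ∈ ⋃ k, J k) :
    (coconeOfDirectedIUnion hmono ι hι).ι.app ⟨α, hα⟩ = (ι k).app ⟨α, hk⟩ :=
  app_eq_app_of_compatible hmono hι _ hk

theorem CategoryTheory.Limits.IsColimit.existsUnique_of_directed_iUnion {c : Cocone F}
    (hc : IsColimit c) (hmono : Monotone J) (hdir : ∀ k, DirectedOn (· ≤ ·) (J k))
    (hcof : ∀ α : I, ∃ β ∈ ⋃ k, J k, α ≤ β)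
    (ι : ∀ k, subsetEmb (J k) ⋙ F ⟶ (Functor.const (J k)).obj B)
    (hι : ∀ {k k'} (h : k ≤ k') (α : J k), (ι k).app α = (ι k').app ⟨α, hmono h α.2⟩) :
    ∃! d : c.pt ⟶ B, ∀ k (α : J k), c.ι.app α ≫ d = (ι k).app α := by
  have := final_subsetEmb_of_cofinal (Set.directedOn_iUnion hmono.directed_le hdir) hcof
  have hcU : IsColimit (c.whisker (subsetEmb (⋃ k, J k))) :=
    (Functor.Final.isColimitWhiskerEquiv _ c).symm hc
  let s := coconeOfDirectedIUnion hmono ι hι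
  refine ⟨hcU.desc s, fun k α => ?_, fun d hd => hcU.hom_ext fun α => ?_⟩
  · exact (hcU.fac s ⟨α, Set.mem_iUnion_of_mem k α.2⟩).trans
      (coconeOfDirectedIUnion_ι_app hmono ι hι α.2 _)
  · obtain ⟨k, hk⟩ := Set.mem_iUnion.mp α.2
    exact (hd k ⟨α, hk⟩).trans ((coconeOfDirectedIUnion_ι_app hmono ι hι hk α.2).symm.trans
      (hcU.fac s α).symm)

end Glue

theorem colimit_of_directed_subfamilies_general {C : Type u} [Category.{v} C]
    {I K : Type*} [Preorder I] [Preorder K]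
    (hK : IsDirected K (· ≤ ·))
    (F : I ⥤ C) (c : Cocone F) (hc : IsColimit c)
    (J : K → Set I)
    (hdir : ∀ k, DirectedOn (· ≤ ·) (J k))
    (hmono : ∀ {k k' : K}, k ≤ k' → J k ⊆ J k')
    (hcof : ∀ α : I, ∃ β ∈ ⋃ k, J k, α ≤ β)
    (ck : ∀ k : K, Cocone (subsetEmb (J k) ⋙ F))
    (hck : ∀ k : K, IsColimit (ck k))
    (Fkk : ∀ {k k' : K}, k ≤ k' → ((ck k).pt ⟶ (ck k').pt))
    (hFkk : ∀ {k k' : K} (h : k ≤ k') (α : J k),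
      (ck k).ι.app α ≫ Fkk h = (ck k').ι.app ⟨α.1, hmono h α.2⟩)
    (Fk : ∀ k : K, ((ck k).pt ⟶ c.pt))
    (hFk : ∀ (k : K) (α : J k), (ck k).ι.app α ≫ Fk k = c.ι.app α.1) :
    (∀ k : K, Fkk (le_refl k) = 𝟙 (ck k).pt) ∧
    (∀ {k k' k'' : K} (h : k ≤ k') (h' : k' ≤ k''), Fkk h ≫ Fkk h' = Fkk (h.trans h')) ∧
    (∀ {k k' : K} (h : k ≤ k'), Fkk h ≫ Fk k' = Fk k) ∧
    (∀ (B : C) (g : ∀ k : K, (ck k).pt ⟶ B),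
      (∀ {k k' : K} (h : k ≤ k'), Fkk h ≫ g k' = g k) →
      ∃! g' : c.pt ⟶ B, ∀ k : K, Fk k ≫ g' = g k) := by
  refine ⟨fun k => (hck k).hom_ext fun α => ?_, fun h h' => (hck _).hom_ext fun α => ?_,
    fun h => (hck _).hom_ext fun α => ?_, fun B g hg => ?_⟩
  · simp [hFkk]
  · rw [reassoc_of% hFkk h α]
    exact (hFkk h' _).trans (hFkk (h.trans h') α).symm
  · rw [reassoc_of% hFkk h α]
    exact (hFk _ _).trans (hFk _ α).symm
  have := hK
  have hcompat {k k' : K} (h : k ≤ k') (α : J k) :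
      (ck k).ι.app α ≫ g k = (ck k').ι.app ⟨α, hmono h α.2⟩ ≫ g k' := by
    rw [← hg h, reassoc_of% hFkk h α]
    rfl
  have hchar (d : c.pt ⟶ B) :
      (∀ k (α : J k), c.ι.app α ≫ d = (ck k).ι.app α ≫ g k) ↔ ∀ k, Fk k ≫ d = g k :=
    ⟨fun hd k => (hck k).hom_ext fun α => ((reassoc_of% (hFk k α)) d).trans (hd k α),
      fun hd k α => ((reassoc_of% (hFk k α)) d).symm.trans (by rw [hd])⟩
  exact (existsUnique_congr hchar).mp (hc.existsUnique_of_directed_iUnion (fun _ _ h => hmono h)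
    hdir hcof (fun k => ((ck k).extend (g k)).ι) hcompat)

/-- **Proposition 2.3.** Let `F : I ⥤ C` be an inductive system over a
directed preordered set `I` with inductive limit `(𝒜, (f^α))`, let `K` be a directed
preordered set and `(J_k)_{k ∈ K}` a family of directed subsets of `I`, increasing in
`k`, whose union is cofinal in `I`, such that each restriction of `F` to `J_k` has an
inductive limit `(𝒜_k, (f^α_{(k)}))`.  Let `f^k_{k'} : 𝒜_k ⟶ 𝒜_{k'}` (for `k ≤ k'`)
and `f^k : 𝒜_k ⟶ 𝒜` be the unique morphisms with `f^k_{k'} ∘ f^α_{(k)} = f^α_{(k')}`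
and `f^k ∘ f^α_{(k)} = f^α` for `α ∈ J_k`.  Then `k ↦ 𝒜_k` with the `f^k_{k'}` is an
inductive system (a functor `K ⥤ C`), and `(𝒜, (f^k))` is its inductive limit. -/
theorem colimit_of_directed_subfamilies {C : Type u} [Category.{v} C]
    {I K : Type*} [Preorder I] [Preorder K]
    (hI : IsDirected I (· ≤ ·)) (hK : IsDirected K (· ≤ ·))
    (F : I ⥤ C) (c : Cocone F) (hc : IsColimit c)
    (J : K → Set I)
    (hdir : ∀ k, DirectedOn (· ≤ ·) (J k))
    (hmono : ∀ {k k' : K}, k ≤ k' → J k ⊆ J k')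
    (hcof : ∀ α : I, ∃ β ∈ ⋃ k, J k, α ≤ β)
    (ck : ∀ k : K, Cocone (subsetEmb (J k) ⋙ F))
    (hck : ∀ k : K, IsColimit (ck k))
    (Fkk : ∀ {k k' : K}, k ≤ k' → ((ck k).pt ⟶ (ck k').pt))
    (hFkk : ∀ {k k' : K} (h : k ≤ k') (α : J k),
      (ck k).ι.app α ≫ Fkk h = (ck k').ι.app ⟨α.1, hmono h α.2⟩)
    (Fk : ∀ k : K, ((ck k).pt ⟶ c.pt))
    (hFk : ∀ (k : K) (α : J k), (ck k).ι.app α ≫ Fk k = c.ι.app α.1) :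
    (∀ k : K, Fkk (le_refl k) = 𝟙 (ck k).pt) ∧
    (∀ {k k' k'' : K} (h : k ≤ k') (h' : k' ≤ k''), Fkk h ≫ Fkk h' = Fkk (h.trans h')) ∧
    (∀ {k k' : K} (h : k ≤ k'), Fkk h ≫ Fk k' = Fk k) ∧
    (∀ (B : C) (g : ∀ k : K, (ck k).pt ⟶ B),
      (∀ {k k' : K} (h : k ≤ k'), Fkk h ≫ g k' = g k) →
      ∃! g' : c.pt ⟶ B, ∀ k : K, Fk k ≫ g' = g k) :=
  colimit_of_directed_subfamilies_general hK F c hc J hdir hmono hcof ck hck Fkk hFkk Fk hFk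
end

section
/- Let S be a monoid that is cancellative (both left and right cancellative) and conical (its only invertible element is the identity e). Let t₁, …, tₙ ∈ S and let τ₁, …, τₙ and τ'₁, …, τ'ₙ be lists over S such that for each k both τₖ and τ'ₖ are factorizations of tₖ (i.e. all entries are ≠ e and the product of the entries of τₖ, respectively τ'ₖ, equals tₖ). If the concatenations satisfy τ₁ ++ ⋯ ++ τₙ = τ'₁ ++ ⋯ ++ τ'ₙ, then τₖ = τ'ₖ for all k ∈ {1, …, n}. -/
/-- A factorization of `t` in a monoid: a finite list of elements, all different
from the unit, whose product is `t`. -/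
def IsMulFactorization {S : Type*} [Monoid S] (t : S) (σ : List S) : Prop :=
  (∀ x ∈ σ, x ≠ 1) ∧ σ.prod = t

/-!
In a left-cancellative monoid without nontrivial units, a factorization of `t` is never a proper
prefix of another factorization of `t`: the surplus factors multiply to `1`, so the first of them
has a right inverse, hence is a unit, hence is `1`. Since `τ₁` and `τ'₁` are prefixes of the same
list, one is a prefix of the other, so they agree; cancel them and repeat with the next blocks.
-/

namespace List

theorem forall₂_ofFn {α β : Type*} {R : α → β → Prop} {n : ℕ} {f : Fin n → α} {g : Fin n → β} :
    Forall₂ R (ofFn f) (ofFn g) ↔ ∀ i, R (f i) (g i) := by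
  induction n with
  | zero => simp
  | succ n ih => simp [ofFn_succ, ih, Fin.forall_fin_succ]

theorem eq_of_forall₂_of_flatten_eq {α : Type*} {R : List α → List α → Prop}
    (hR : ∀ {A B M₁ M₂}, R A B → A ++ M₁ = B ++ M₂ → A = B) {Ls Ls' : List (List α)}
    (h : Forall₂ R Ls Ls') (hflat : Ls.flatten = Ls'.flatten) : Ls = Ls' := by
  induction h with
  | nil => rfl
  | cons hAB _ ih =>
    rw [flatten_cons, flatten_cons] at hflat
    obtain rfl := hR hAB hflat
    rw [ih (append_cancel_left hflat)]

variable {M : Type*} [Monoid M]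

theorem eq_nil_of_prod_eq_one [IsDedekindFiniteMonoid M] [Subsingleton Mˣ] {L : List M}
    (hL : ∀ x ∈ L, x ≠ 1) (h : L.prod = 1) : L = [] := by
  cases L with
  | nil => rfl
  | cons x L =>
    rw [prod_cons] at h
    exact absurd (IsUnit.of_mul_eq_one _ h).eq_one (hL x mem_cons_self)

end List

namespace IsMulFactorization

open List

variable {M : Type*} [Monoid M] [IsLeftCancelMul M] [Subsingleton Mˣ] {t : M} {A B : List M}

theorem eq_of_isPrefix (hA : IsMulFactorization t A) (hB : IsMulFactorization t B)
    (hAB : A <+: B) : A = B := by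
  obtain ⟨C, rfl⟩ := hAB
  have hC : C.prod = 1 := mul_eq_left.mp (by rw [← prod_append, hA.2, hB.2])
  rw [eq_nil_of_prod_eq_one (fun x hx => hB.1 x (mem_append_right A hx)) hC, append_nil]

theorem eq_of_append_eq_append (hA : IsMulFactorization t A) (hB : IsMulFactorization t B)
    {M₁ M₂ : List M} (h : A ++ M₁ = B ++ M₂) : A = B := by
  rcases prefix_or_prefix_of_prefix (prefix_append A M₁) (h ▸ prefix_append B M₂) with hAB | hBA
  · exact hA.eq_of_isPrefix hB hAB
  · exact (hB.eq_of_isPrefix hA hBA).symm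

end IsMulFactorization

theorem factorization_concat_unique_general {S : Type*} [Monoid S]
    (hleft : ∀ a b c : S, a * b = a * c → b = c)
    (hconical : ∀ a : S, IsUnit a → a = 1)
    {n : ℕ} (t : Fin n → S) (τ τ' : Fin n → List S)
    (hτ : ∀ k, IsMulFactorization (t k) (τ k))
    (hτ' : ∀ k, IsMulFactorization (t k) (τ' k))
    (hcat : (List.ofFn τ).flatten = (List.ofFn τ').flatten) :
    ∀ k, τ k = τ' k := by
  have : IsLeftCancelMul S := ⟨hleft⟩
  have := Subsingleton.units_of_isUnit hconical
  have hblocks : List.Forall₂ (fun A B => ∃ s, IsMulFactorization s A ∧ IsMulFactorization s B)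
      (List.ofFn τ) (List.ofFn τ') := List.forall₂_ofFn.mpr fun k => ⟨t k, hτ k, hτ' k⟩
  have hofFn := List.eq_of_forall₂_of_flatten_eq
    (fun ⟨_, hA, hB⟩ happ => hA.eq_of_append_eq_append hB happ) hblocks hcat
  exact congrFun (List.ofFn_inj.mp hofFn)

/-- **Proposition 4.5.** Let `S` be a cancellative, conical monoid.
If `τ₁ ++ ⋯ ++ τₙ = τ'₁ ++ ⋯ ++ τ'ₙ`, where for each `k` both `τ k` and `τ' k`
are factorizations of the same element `t k`, then `τ k = τ' k` for all `k`. -/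
theorem factorization_concat_unique {S : Type*} [Monoid S]
    (hleft : ∀ a b c : S, a * b = a * c → b = c)
    (hright : ∀ a b c : S, b * a = c * a → b = c)
    (hconical : ∀ a : S, IsUnit a → a = 1)
    {n : ℕ} (t : Fin n → S) (τ τ' : Fin n → List S)
    (hτ : ∀ k, IsMulFactorization (t k) (τ k))
    (hτ' : ∀ k, IsMulFactorization (t k) (τ' k))
    (hcat : (List.ofFn τ).flatten = (List.ofFn τ').flatten) :
    ∀ k, τ k = τ' k :=
  factorization_concat_unique_general hleft hconical t τ τ' hτ hτ' hcat
end

section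
/- Let S be a cancellative monoid that is conical, a unique factorization monoid, and an Ore monoid. Then S is totally ordered with respect to left divisibility: for all s, t ∈ S, either there exists p ∈ S with s·p = t, or there exists q ∈ S with t·q = s. -/
/-- `σ` is a refinement of the factorization `τ = (t₁, …, tₙ)`:
`σ = τ₁ ++ ⋯ ++ τₙ` where each `τₖ` is a factorization of `tₖ`. -/
def IsRefinement {S : Type*} [Monoid S] (σ τ : List S) : Prop :=
  ∃ L : List (List S), List.Forall₂ (fun t τk => IsMulFactorization t τk) τ L ∧ σ = L.flatten

/-!
By the Ore condition `s` and `t` have a common right multiple `r = s p = t q`. The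
factorizations `(s, p)` and `(t, q)` of `r` have a common refinement `ρ`, in which factorizations
of `s` and of `t` both occur as prefixes; one prefix extends the other, so one of `s`, `t` is a
left divisor of the other. The cases where one of `s, p, t, q` is `1` are trivial.
-/

section

variable {S : Type*} [Monoid S]

lemma IsMulFactorization.pair {a b : S} (ha : a ≠ 1) (hb : b ≠ 1) :
    IsMulFactorization (a * b) [a, b] := by
  simp [IsMulFactorization, ha, hb]

lemma IsRefinement.exists_prefix_prod_eq_head {ρ τ : List S} {a : S}
    (h : IsRefinement ρ (a :: τ)) : ∃ α, α <+: ρ ∧ α.prod = a := by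
  obtain ⟨L, hL, rfl⟩ := h
  obtain ⟨α, L', hα, -, rfl⟩ := List.forall₂_cons_left_iff.mp hL
  exact ⟨α, List.prefix_append _ _, hα.2⟩

lemma List.IsPrefix.exists_prod_mul_eq {α β : List S} (h : α <+: β) :
    ∃ d, α.prod * d = β.prod := by
  obtain ⟨δ, rfl⟩ := h
  exact ⟨δ.prod, List.prod_append.symm⟩

lemma exists_mul_eq_or_of_mul_eq_mul
    (huf : ∀ (t : S) (σ τ : List S), IsMulFactorization t σ → IsMulFactorization t τ →
      ∃ ρ : List S, IsRefinement ρ σ ∧ IsRefinement ρ τ)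
    {s p t q : S} (hs : s ≠ 1) (hp : p ≠ 1) (ht : t ≠ 1) (hq : q ≠ 1) (h : s * p = t * q) :
    (∃ d, s * d = t) ∨ ∃ d, t * d = s := by
  have htq : IsMulFactorization (s * p) [t, q] := h ▸ .pair ht hq
  obtain ⟨ρ, hsρ, htρ⟩ := huf (s * p) _ _ (.pair hs hp) htq
  obtain ⟨α, hαρ, rfl⟩ := hsρ.exists_prefix_prod_eq_head
  obtain ⟨β, hβρ, rfl⟩ := htρ.exists_prefix_prod_eq_head
  exact (List.prefix_or_prefix_of_prefix hαρ hβρ).imp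
    List.IsPrefix.exists_prod_mul_eq List.IsPrefix.exists_prod_mul_eq

end

theorem totally_ordered_of_cuf_ore_general {S : Type*} [Monoid S]
    (huf : ∀ (t : S) (σ τ : List S), IsMulFactorization t σ → IsMulFactorization t τ →
      ∃ ρ : List S, IsRefinement ρ σ ∧ IsRefinement ρ τ)
    (hore : ∀ s t : S, ∃ r : S, (∃ p : S, s * p = r) ∧ ∃ q : S, t * q = r) :
    ∀ s t : S, (∃ p : S, s * p = t) ∨ ∃ q : S, t * q = s := by
  intro s t
  obtain ⟨r, ⟨p, rfl⟩, ⟨q, hr⟩⟩ := hore s t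
  by_cases hs : s = 1
  · exact .inl ⟨t, by rw [hs, one_mul]⟩
  by_cases ht : t = 1
  · exact .inr ⟨s, by rw [ht, one_mul]⟩
  by_cases hp : p = 1
  · exact .inr ⟨q, by rw [hr, hp, mul_one]⟩
  by_cases hq : q = 1
  · exact .inl ⟨p, by rw [← mul_one t, ← hq, hr]⟩
  exact exists_mul_eq_or_of_mul_eq_mul huf hs hp ht hq hr.symm

/-- **half of Theorem 4.15.** A cancellative, conical monoid which is
a unique factorization monoid and an Ore monoid is totally ordered with respect to
left divisibility. -/
theorem totally_ordered_of_cuf_ore {S : Type*} [Monoid S]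
    (hleft : ∀ a b c : S, a * b = a * c → b = c)
    (hright : ∀ a b c : S, b * a = c * a → b = c)
    (hconical : ∀ a : S, IsUnit a → a = 1)
    (huf : ∀ (t : S) (σ τ : List S), IsMulFactorization t σ → IsMulFactorization t τ →
      ∃ ρ : List S, IsRefinement ρ σ ∧ IsRefinement ρ τ)
    (hore : ∀ s t : S, ∃ r : S, (∃ p : S, s * p = r) ∧ ∃ q : S, t * q = r) :
    ∀ s t : S, (∃ p : S, s * p = t) ∨ ∃ q : S, t * q = s :=
  totally_ordered_of_cuf_ore_general huf hore
end
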